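/- Let ψ ∈ ℝ^N satisfy M⁻¹(−Δ)ψ = ω² ψ with ω > 0 (free boundary conditions). Then ψ̃ := ω⁻¹ ∇₊ψ ∈ ℝ^{N−1} satisfies −(∇₊ M⁻¹ ∇₋) ψ̃ = ω² ψ̃, where (∇₋v)_x = v_x − v_{x−1} for 1 ≤ x ≤ N with the convention v_0 = v_N = 0. Moreover, if {ψ^k}_{0≤k≤N−1} is a family with M⁻¹(−Δ)ψ^k = ω_k² ψ^k, ⟨ψ^j, Mψ^k⟩ = δ_{jk}, ω_0 = 0 and ω_k > 0 for k ≥ 1, then {ω_k^{−1}∇₊ψ^k}_{1≤k≤N−1} is an orthonormal basis of ℝ^{N−1} for the standard inner product. -/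

import Mathlib

/-!
Free boundary conditions make the extension of `ψ̃` by `ψ̃_0 = ψ̃_N = 0` agree with
`ω⁻¹∇₊ψ` at `0` and `N`, so `∇₋ψ̃ = ω⁻¹Δψ = −ωMψ`; hence `∇₊M⁻¹∇₋ψ̃ = −ω∇₊ψ = −ω²ψ̃`.

For the eigenbasis, summation by parts (whose boundary terms vanish by the free boundary
conditions) gives `⟨∇₊ψ^j, ∇₊ψ^k⟩ = ⟨ψ^j, −Δψ^k⟩ = ω_k²⟨ψ^j, Mψ^k⟩ = ω_k² δ_{jk}`, so the
`N − 1` vectors `ω_k⁻¹∇₊ψ^k` are orthonormal in `ℝ^{N−1}`. The matrix having them as rows is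
then orthogonal, so its columns are orthonormal too, which is the completeness relation.
-/

open Finset

/-- Eigenmodes of the operator `M⁻¹(−Δ)` with free boundary conditions
(`ψ_0 = ψ_1`, `ψ_{N+1} = ψ_N`), normalized by `⟨ψ^j, Mψ^k⟩ = δ_{jk}`, with `ω_0 = 0` and
`ω_k > 0` for `1 ≤ k ≤ N−1`. -/
def IsEigenSystem (N : ℕ) (m : ℕ → ℝ) (ψ : ℕ → ℕ → ℝ) (W : ℕ → ℝ) : Prop :=
  (∀ k ≤ N - 1, ψ k 0 = ψ k 1 ∧ ψ k (N + 1) = ψ k N) ∧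
  (∀ k ≤ N - 1, ∀ x : ℕ, 1 ≤ x → x ≤ N →
    -(ψ k (x + 1) - 2 * ψ k x + ψ k (x - 1)) = (W k) ^ 2 * (m x * ψ k x)) ∧
  (∀ j ≤ N - 1, ∀ k ≤ N - 1,
    (∑ x ∈ Finset.Icc 1 N, m x * ψ j x * ψ k x) = if j = k then 1 else 0) ∧
  W 0 = 0 ∧ (∀ k : ℕ, 1 ≤ k → k ≤ N - 1 → 0 < W k)

theorem fwdDiff_div_sub_fwdDiff_div {ψ m : ℕ → ℝ} {ω : ℝ} (hω : ω ≠ 0) {x : ℕ}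
    (h : -(ψ (x + 1) - 2 * ψ x + ψ (x - 1)) = ω ^ 2 * (m x * ψ x)) :
    (ψ (x + 1) - ψ x) / ω - (ψ x - ψ (x - 1)) / ω = -(ω * (m x * ψ x)) := by
  field_simp
  linear_combination -h

theorem neg_fwdDiff_massInv_bwdDiff_eq (N : ℕ) (m : ℕ → ℝ) (hm : ∀ x, m x ≠ 0)
    (ψ : ℕ → ℝ) (ω : ℝ) (hω : ω ≠ 0)
    (hbc0 : ψ 0 = ψ 1) (hbcN : ψ (N + 1) = ψ N)
    (heig : ∀ x : ℕ, 1 ≤ x → x ≤ N →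
      -(ψ (x + 1) - 2 * ψ x + ψ (x - 1)) = ω ^ 2 * (m x * ψ x))
    (ψt : ℕ → ℝ)
    (hψt : ∀ x : ℕ, ψt x = if 1 ≤ x ∧ x ≤ N - 1 then (ψ (x + 1) - ψ x) / ω else 0)
    {x : ℕ} (hx1 : 1 ≤ x) (hx : x ≤ N - 1) :
    -((ψt (x + 1) - ψt x) / m (x + 1) - (ψt x - ψt (x - 1)) / m x) = ω ^ 2 * ψt x := by
  have hψt_fwd : ∀ y ≤ N, ψt y = (ψ (y + 1) - ψ y) / ω := by
    intro y hy
    rw [hψt]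
    split_ifs
    · rfl
    · obtain rfl | rfl : y = 0 ∨ y = N := by omega
      · rw [hbc0, sub_self, zero_div]
      · rw [hbcN, sub_self, zero_div]
  have hψt_bwd : ∀ y, 1 ≤ y → y ≤ N → ψt y - ψt (y - 1) = -(ω * (m y * ψ y)) := by
    intro y hy1 hy
    rw [hψt_fwd y hy, hψt_fwd (y - 1) (by omega), Nat.sub_add_cancel hy1]
    exact fwdDiff_div_sub_fwdDiff_div hω (heig y hy1 hy)
  have hnext := hψt_bwd (x + 1) (by omega) (by omega)
  rw [Nat.add_sub_cancel] at hnext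
  rw [hnext, hψt_bwd x hx1 (by omega), hψt_fwd x (by omega)]
  field_simp [hm x, hm (x + 1)]
  ring

section SummationByParts

variable {R : Type*} [CommRing R]

theorem sum_fwdDiff_mul_fwdDiff_eq (f g : ℕ → R) (n : ℕ) :
    ∑ x ∈ Icc 1 n, (f (x + 1) - f x) * (g (x + 1) - g x)
      = ∑ x ∈ Icc 1 n, f x * -(g (x + 1) - 2 * g x + g (x - 1))
        + f (n + 1) * (g (n + 1) - g n) - f 1 * (g 1 - g 0) := by
  induction n with
  | zero => simp
  | succ n ih =>
    rw [sum_Icc_succ_top (by omega), sum_Icc_succ_top (by omega), ih, Nat.add_sub_cancel]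
    ring

theorem sum_fwdDiff_mul_fwdDiff_of_free_bc (f g : ℕ → R) (n : ℕ)
    (h0 : g 0 = g 1) (hn : g (n + 2) = g (n + 1)) :
    ∑ x ∈ Icc 1 n, (f (x + 1) - f x) * (g (x + 1) - g x)
      = ∑ x ∈ Icc 1 (n + 1), f x * -(g (x + 1) - 2 * g x + g (x - 1)) := by
  rw [sum_fwdDiff_mul_fwdDiff_eq, sum_Icc_succ_top (by omega), Nat.add_sub_cancel, hn, h0]
  ring

end SummationByParts

theorem IsEigenSystem.sum_fwdDiff_div_mul_fwdDiff_div {N : ℕ} {m : ℕ → ℝ}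
    {Ψ : ℕ → ℕ → ℝ} {W : ℕ → ℝ} (hE : IsEigenSystem N m Ψ W) {j k : ℕ}
    (hj1 : 1 ≤ j) (hj : j ≤ N - 1) (hk1 : 1 ≤ k) (hk : k ≤ N - 1) :
    ∑ x ∈ Icc 1 (N - 1), ((Ψ j (x + 1) - Ψ j x) / W j) * ((Ψ k (x + 1) - Ψ k x) / W k)
      = if j = k then 1 else 0 := by
  obtain ⟨hbc, heig, horth, -, hWpos⟩ := hE
  obtain ⟨n, rfl⟩ : ∃ n, N = n + 1 := ⟨N - 1, by omega⟩
  rw [Nat.add_sub_cancel] at hj hk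
  have hgreen : ∑ x ∈ Icc 1 n, (Ψ j (x + 1) - Ψ j x) * (Ψ k (x + 1) - Ψ k x)
      = W k ^ 2 * if j = k then 1 else 0 := by
    rw [sum_fwdDiff_mul_fwdDiff_of_free_bc _ _ n (hbc k (by omega)).1 (hbc k (by omega)).2,
      ← horth j (by omega) k (by omega), mul_sum]
    refine sum_congr rfl fun x hx => ?_
    rw [mem_Icc] at hx
    rw [heig k (by omega) x hx.1 hx.2]
    ring
  have hWj := (hWpos j hj1 (by omega)).ne'
  have hWk := (hWpos k hk1 (by omega)).ne'
  calc _ = (W j * W k)⁻¹ * ∑ x ∈ Icc 1 n, (Ψ j (x + 1) - Ψ j x) * (Ψ k (x + 1) - Ψ k x) := by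
        rw [Nat.add_sub_cancel, mul_sum]
        exact sum_congr rfl fun x _ => by field_simp
    _ = if j = k then 1 else 0 := by
        rw [hgreen]
        split_ifs with hjk
        · subst hjk
          field_simp
        · simp

open scoped Matrix in
theorem sum_coeff_mul_eq_of_orthonormal {R α : Type*} [CommRing R] [DecidableEq α]
    (s : Finset α) (φ : α → α → R)
    (h : ∀ j ∈ s, ∀ k ∈ s, ∑ x ∈ s, φ j x * φ k x = if j = k then 1 else 0)
    (v : α → R) {x : α} (hx : x ∈ s) :
    v x = ∑ k ∈ s, (∑ y ∈ s, φ k y * v y) * φ k x := by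
  let A : Matrix s s R := fun k y => φ k y
  have hA : A * Aᵀ = 1 := by
    ext j k
    rw [Matrix.mul_apply, Matrix.one_apply]
    simp only [Subtype.ext_iff]
    rw [← h j j.2 k k.2]
    exact sum_coe_sort s fun x => φ j x * φ k x
  have hv := congrFun (Matrix.mulVec_mulVec (fun y : s => v y) Aᵀ A) ⟨x, hx⟩
  rw [mul_eq_one_comm.mp hA, Matrix.one_mulVec] at hv
  rw [← hv, ← sum_attach s]
  refine sum_congr rfl fun k _ => ?_
  rw [← sum_attach s, mul_comm]
  rfl

theorem stmt13_general (N : ℕ) (m : ℕ → ℝ) (hm : ∀ x, 0 < m x)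
    (ψ : ℕ → ℝ) (ω : ℝ) (hω : 0 < ω)
    (hbc0 : ψ 0 = ψ 1) (hbcN : ψ (N + 1) = ψ N)
    (heig : ∀ x : ℕ, 1 ≤ x → x ≤ N →
      -(ψ (x + 1) - 2 * ψ x + ψ (x - 1)) = ω ^ 2 * (m x * ψ x))
    (ψt : ℕ → ℝ)
    (hψt : ∀ x : ℕ, ψt x = if 1 ≤ x ∧ x ≤ N - 1 then (ψ (x + 1) - ψ x) / ω else 0) :
    (∀ x : ℕ, 1 ≤ x → x ≤ N - 1 →
      -((ψt (x + 1) - ψt x) / m (x + 1) - (ψt x - ψt (x - 1)) / m x) = ω ^ 2 * ψt x) ∧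
    (∀ (Ψ : ℕ → ℕ → ℝ) (W : ℕ → ℝ), IsEigenSystem N m Ψ W →
      -- orthonormality of `{ω_k⁻¹∇₊Ψ^k}_{1≤k≤N−1}`
      ((∀ j : ℕ, 1 ≤ j → j ≤ N - 1 → ∀ k : ℕ, 1 ≤ k → k ≤ N - 1 →
        (∑ x ∈ Finset.Icc 1 (N - 1),
          ((Ψ j (x + 1) - Ψ j x) / W j) * ((Ψ k (x + 1) - Ψ k x) / W k))
          = if j = k then 1 else 0) ∧
      -- completeness: every vector of `ℝ^{N−1}` is the sum of its mode components
      (∀ v : ℕ → ℝ, ∀ x : ℕ, 1 ≤ x → x ≤ N - 1 →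
        v x = ∑ k ∈ Finset.Icc 1 (N - 1),
          (∑ y ∈ Finset.Icc 1 (N - 1), ((Ψ k (y + 1) - Ψ k y) / W k) * v y)
            * ((Ψ k (x + 1) - Ψ k x) / W k)))) := by
  refine ⟨fun x hx1 hx => neg_fwdDiff_massInv_bwdDiff_eq N m (fun x => (hm x).ne') ψ ω hω.ne'
    hbc0 hbcN heig ψt hψt hx1 hx, fun Ψ W hE => ⟨fun j hj1 hj k hk1 hk =>
      hE.sum_fwdDiff_div_mul_fwdDiff_div hj1 hj hk1 hk, fun v x hx1 hx =>
      sum_coeff_mul_eq_of_orthonormal _ _ (fun j hj k hk => ?_) v (mem_Icc.2 ⟨hx1, hx⟩)⟩⟩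
  rw [mem_Icc] at hj hk
  exact hE.sum_fwdDiff_div_mul_fwdDiff_div hj.1 hj.2 hk.1 hk.2

/-- if `M⁻¹(−Δ)ψ = ω²ψ` with `ω > 0` (free boundary conditions), then
`ψ̃ = ω⁻¹∇₊ψ` satisfies `−(∇₊M⁻¹∇₋)ψ̃ = ω²ψ̃` (with `ψ̃_0 = ψ̃_N = 0`); moreover for a full
orthonormal family `{ψ^k}`, the vectors `{ω_k⁻¹∇₊ψ^k}_{1≤k≤N−1}` form an orthonormal basis
of `ℝ^{N−1}`. -/
theorem stmt13 (N : ℕ) (hN : 2 ≤ N) (m : ℕ → ℝ) (hm : ∀ x, 0 < m x)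
    (ψ : ℕ → ℝ) (ω : ℝ) (hω : 0 < ω)
    (hbc0 : ψ 0 = ψ 1) (hbcN : ψ (N + 1) = ψ N)
    (heig : ∀ x : ℕ, 1 ≤ x → x ≤ N →
      -(ψ (x + 1) - 2 * ψ x + ψ (x - 1)) = ω ^ 2 * (m x * ψ x))
    (ψt : ℕ → ℝ)
    (hψt : ∀ x : ℕ, ψt x = if 1 ≤ x ∧ x ≤ N - 1 then (ψ (x + 1) - ψ x) / ω else 0) :
    (∀ x : ℕ, 1 ≤ x → x ≤ N - 1 →
      -((ψt (x + 1) - ψt x) / m (x + 1) - (ψt x - ψt (x - 1)) / m x) = ω ^ 2 * ψt x) ∧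
    (∀ (Ψ : ℕ → ℕ → ℝ) (W : ℕ → ℝ), IsEigenSystem N m Ψ W →
      -- orthonormality of `{ω_k⁻¹∇₊Ψ^k}_{1≤k≤N−1}`
      ((∀ j : ℕ, 1 ≤ j → j ≤ N - 1 → ∀ k : ℕ, 1 ≤ k → k ≤ N - 1 →
        (∑ x ∈ Finset.Icc 1 (N - 1),
          ((Ψ j (x + 1) - Ψ j x) / W j) * ((Ψ k (x + 1) - Ψ k x) / W k))
          = if j = k then 1 else 0) ∧
      -- completeness: every vector of `ℝ^{N−1}` is the sum of its mode components
      (∀ v : ℕ → ℝ, ∀ x : ℕ, 1 ≤ x → x ≤ N - 1 →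
        v x = ∑ k ∈ Finset.Icc 1 (N - 1),
          (∑ y ∈ Finset.Icc 1 (N - 1), ((Ψ k (y + 1) - Ψ k y) / W k) * v y)
            * ((Ψ k (x + 1) - Ψ k x) / W k)))) :=
  stmt13_general N m hm ψ ω hω hbc0 hbcN heig ψt hψt
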